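/- arXiv:0710.0126 — 4 statements merged into one kernel-verified Lean document; each statement's English description precedes it below -/
import Mathlib

section
/- Let G be a compact subgroup of O(n) with Lie algebra 𝔤, and let (x, ξ) ∈ ℝⁿ × ℝⁿ satisfy ⟨Ax, ξ⟩ = 0 for all A ∈ 𝔤. Then for all A, B ∈ 𝔤 one has ⟨Ax, Bξ⟩ = ⟨Bx, Aξ⟩. -/
open Matrix

/-- Let `G ⊂ O(n)` be a compact group with Lie algebra `𝔤`
(consisting of skew-symmetric matrices, closed under the commutator bracket),
and let `(x, ξ)` satisfy `⟨Ax, ξ⟩ = 0` for all `A ∈ 𝔤`. Then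
`⟨Ax, Bξ⟩ = ⟨Bx, Aξ⟩` for all `A, B ∈ 𝔤`. -/
theorem stmt_1 {n : ℕ} (𝔤 : Set (Matrix (Fin n) (Fin n) ℝ)) (x ξ : Fin n → ℝ)
    (hskew : ∀ A ∈ 𝔤, Aᵀ = -A)
    (hlie : ∀ A ∈ 𝔤, ∀ B ∈ 𝔤, A * B - B * A ∈ 𝔤)
    (hmom : ∀ A ∈ 𝔤, (A.mulVec x) ⬝ᵥ ξ = 0) :
    ∀ A ∈ 𝔤, ∀ B ∈ 𝔤,
      (A.mulVec x) ⬝ᵥ (B.mulVec ξ) = (B.mulVec x) ⬝ᵥ (A.mulVec ξ) := by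
  intro A hA B hB
  have hc := hmom _ (hlie A hA B hB)
  have e : ∀ M N : Matrix (Fin n) (Fin n) ℝ,
      (M.mulVec x) ⬝ᵥ (N.mulVec ξ) = ((Nᵀ * M).mulVec x) ⬝ᵥ ξ := by
    intro M N
    rw [Matrix.dotProduct_mulVec, ← Matrix.mulVec_transpose, ← Matrix.mulVec_mulVec]
  rw [e, e, hskew B hB, hskew A hA, Matrix.neg_mul, Matrix.neg_mul,
    Matrix.neg_mulVec, Matrix.neg_mulVec, neg_dotProduct, neg_dotProduct]
  rw [Matrix.sub_mulVec, sub_dotProduct] at hc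
  linarith
end

section
/- Let k ∈ O(n) and let U, V be n×κ real matrices with ᵗU U + ᵗV V = 1_κ, ᵗU V = ᵗV U, k U ᵗU = U ᵗU k, k V ᵗV = V ᵗV k, k U ᵗV = U ᵗV k, k V ᵗU = V ᵗU k, (k − 1)(U ᵗV) = (k − 1)(V ᵗU) and (k − 1)(U ᵗU + V ᵗV) = k − 1. Then the determinant of the 2κ×2κ block matrix [[ᵗU(k−1)U + 1_κ , ᵗV(k⁻¹−1)(k−1)U],[ −ᵗV U , ᵗU(k⁻¹−1)U + 1_κ]] equals 1. -/
open Matrix Polynomial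

/-- Determinant of a 2x2 block matrix with commuting lower blocks. -/
private lemma det_fromBlocks_of_comm {κ : ℕ} (A B C D : Matrix (Fin κ) (Fin κ) ℝ)
    (h : C * D = D * C) :
    (Matrix.fromBlocks A B C D).det = (A * D - B * C).det := by
  classical
  set φ : ℝ →+* ℝ[X] := (Polynomial.C : ℝ →+* ℝ[X]) with hφ
  set ψ : ℝ[X] →+* ℝ := Polynomial.evalRingHom 0 with hψ
  set A' := A.map φ with hA'
  set B' := B.map φ with hB'
  set C' := C.map φ with hC'
  set D' := charmatrix (-D) with hD'
  have hD'eq : D' = Matrix.scalar (Fin κ) X + D.map φ := by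
    rw [hD']
    simp only [charmatrix]
    rw [map_neg, sub_neg_eq_add, RingHom.mapMatrix_apply]
  have hdet : D'.det ≠ 0 := by
    have : D'.det = (-D).charpoly := rfl
    rw [this]
    exact (charpoly_monic (-D)).ne_zero
  have hcomm : C' * D' = D' * C' := by
    rw [hD'eq, Matrix.mul_add, Matrix.add_mul]
    congr 1
    · exact (scalar_commute X commute_X C').symm
    · rw [hC', ← Matrix.map_mul, ← Matrix.map_mul, h]
  have key : (Matrix.fromBlocks A' B' C' D') * (Matrix.fromBlocks D' 0 (-C') 1)
      = Matrix.fromBlocks (A' * D' - B' * C') B' 0 D' := by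
    rw [Matrix.fromBlocks_multiply, Matrix.mul_zero, Matrix.mul_zero, Matrix.mul_one,
      Matrix.mul_one, Matrix.mul_neg, Matrix.mul_neg, hcomm, add_neg_cancel, zero_add,
      zero_add, ← sub_eq_add_neg]
  have e1 := congrArg Matrix.det key
  rw [det_mul, det_fromBlocks_zero₁₂, det_fromBlocks_zero₂₁, det_one, mul_one] at e1
  have e2 : (Matrix.fromBlocks A' B' C' D').det = (A' * D' - B' * C').det :=
    mul_right_cancel₀ hdet e1
  have hmapA : A'.map ψ = A := by
    ext i j; simp [hA', hφ, hψ, Matrix.map_apply]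
  have hmapB : B'.map ψ = B := by
    ext i j; simp [hB', hφ, hψ, Matrix.map_apply]
  have hmapC : C'.map ψ = C := by
    ext i j; simp [hC', hφ, hψ, Matrix.map_apply]
  have hmapD : D'.map ψ = D := by
    ext i j
    rcases eq_or_ne i j with rfl | hij
    · simp [hD', hψ, Matrix.map_apply]
    · simp [hD', hψ, Matrix.map_apply, hij]
  have hsub : (A' * D' - B' * C').map ψ = A * D - B * C := by
    have : ψ.mapMatrix (A' * D' - B' * C')
        = ψ.mapMatrix A' * ψ.mapMatrix D' - ψ.mapMatrix B' * ψ.mapMatrix C' := by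
      rw [_root_.map_sub, _root_.map_mul, _root_.map_mul]
    simpa only [RingHom.mapMatrix_apply, hmapA, hmapB, hmapC, hmapD] using this
  calc (Matrix.fromBlocks A B C D).det
      = ((Matrix.fromBlocks A' B' C' D').map ψ).det := by
        rw [Matrix.fromBlocks_map, hmapA, hmapB, hmapC, hmapD]
    _ = ψ (Matrix.fromBlocks A' B' C' D').det := (RingHom.map_det ψ _).symm
    _ = ψ (A' * D' - B' * C').det := by rw [e2]
    _ = ((A' * D' - B' * C').map ψ).det := RingHom.map_det ψ _
    _ = (A * D - B * C).det := by rw [hsub]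

/-- The two key commutation identities. -/
private lemma key_block {n κ : ℕ} (U V : Matrix (Fin n) (Fin κ) ℝ)
    (w : Matrix (Fin n) (Fin n) ℝ)
    (ha : Uᵀ * U + Vᵀ * V = 1)
    (hc1 : w * (U * Uᵀ) = (U * Uᵀ) * w)
    (hc2 : w * (V * Vᵀ) = (V * Vᵀ) * w)
    (hc3 : w * (U * Vᵀ) = (U * Vᵀ) * w)
    (hd : w * (U * Vᵀ) = w * (V * Uᵀ))
    (he : w * (U * Uᵀ + V * Vᵀ) = w) :
    (Vᵀ * U) * (Uᵀ * w * U) = (Uᵀ * w * U) * (Vᵀ * U) ∧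
    (Uᵀ * w * U) * (Vᵀ * V) = (Vᵀ * U) * (Vᵀ * w * U) := by
  have pUU : ∀ {m' : Type} (R : Matrix (Fin n) m' ℝ),
      w * (U * (Uᵀ * R)) = U * (Uᵀ * (w * R)) := by
    intro m' R
    simpa only [Matrix.mul_assoc] using congrArg (fun x => x * R) hc1
  have pVV : ∀ {m' : Type} (R : Matrix (Fin n) m' ℝ),
      w * (V * (Vᵀ * R)) = V * (Vᵀ * (w * R)) := by
    intro m' R
    simpa only [Matrix.mul_assoc] using congrArg (fun x => x * R) hc2
  have pUV : ∀ {m' : Type} (R : Matrix (Fin n) m' ℝ),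
      w * (U * (Vᵀ * R)) = U * (Vᵀ * (w * R)) := by
    intro m' R
    simpa only [Matrix.mul_assoc] using congrArg (fun x => x * R) hc3
  have pd : ∀ {m' : Type} (R : Matrix (Fin n) m' ℝ),
      w * (U * (Vᵀ * R)) = w * (V * (Uᵀ * R)) := by
    intro m' R
    simpa only [Matrix.mul_assoc] using congrArg (fun x => x * R) hd
  have pe : ∀ {m' : Type} (R : Matrix (Fin n) m' ℝ),
      w * (U * (Uᵀ * R)) + w * (V * (Vᵀ * R)) = w * R := by
    intro m' R
    simpa only [Matrix.mul_assoc, Matrix.add_mul, Matrix.mul_add] using congrArg (fun x => x * R) he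
  have pa : ∀ {m' : Type} (R : Matrix (Fin κ) m' ℝ),
      Uᵀ * (U * R) + Vᵀ * (V * R) = R := by
    intro m' R
    simpa only [Matrix.mul_assoc, Matrix.add_mul, Matrix.one_mul]
      using congrArg (fun x => x * R) ha
  constructor
  · simp only [Matrix.mul_assoc]
    rw [← pUU U, pUV U, eq_sub_of_add_eq (pa (Vᵀ * (w * U))), ← pVV U,
      eq_sub_of_add_eq (pe U), Matrix.mul_sub]
  · simp only [Matrix.mul_assoc]
    have hV : V * (Uᵀ * U) = V - V * (Vᵀ * V) := by
      apply eq_sub_of_add_eq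
      simpa only [Matrix.mul_add, Matrix.mul_one, ← Matrix.mul_assoc]
        using congrArg (fun x => V * x) ha
    rw [pUV V, eq_sub_of_add_eq (pa (Vᵀ * (w * V))), ← pVV V, ← pUV U, pd U, hV,
      Matrix.mul_sub, Matrix.mul_sub]

/-- Let `k ∈ O(n)` and `U, V` be real `n × κ` matrices with
`ᵗUU + ᵗVV = 1`, `ᵗUV = ᵗVU`, `k` commuting with `UᵗU, VᵗV, UᵗV, VᵗU`,
`(k−1)UᵗV = (k−1)VᵗU` and `(k−1)(UᵗU + VᵗV) = k−1`. Then the determinant of the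
`2κ × 2κ` block matrix
`[[ᵗU(k−1)U + 1, ᵗV(k⁻¹−1)(k−1)U], [−ᵗVU, ᵗU(k⁻¹−1)U + 1]]` equals `1`. -/
theorem stmt_3 {n κ : ℕ} (k : Matrix (Fin n) (Fin n) ℝ)
    (U V : Matrix (Fin n) (Fin κ) ℝ)
    (hk : kᵀ * k = 1)
    (ha : Uᵀ * U + Vᵀ * V = 1)
    (hb : Uᵀ * V = Vᵀ * U)
    (hc1 : k * (U * Uᵀ) = (U * Uᵀ) * k)
    (hc2 : k * (V * Vᵀ) = (V * Vᵀ) * k)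
    (hc3 : k * (U * Vᵀ) = (U * Vᵀ) * k)
    (hc4 : k * (V * Uᵀ) = (V * Uᵀ) * k)
    (hd : (k - 1) * (U * Vᵀ) = (k - 1) * (V * Uᵀ))
    (he : (k - 1) * (U * Uᵀ + V * Vᵀ) = k - 1) :
    (Matrix.fromBlocks
        (Uᵀ * (k - 1) * U + 1) (Vᵀ * (k⁻¹ - 1) * ((k - 1) * U))
        (-(Vᵀ * U)) (Uᵀ * (k⁻¹ - 1) * U + 1)).det = 1 := by
  classical
  have hk' : k * kᵀ = 1 := mul_eq_one_comm.mp hk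
  have hkinv : k⁻¹ = kᵀ := Matrix.inv_eq_left_inv hk
  rw [hkinv]
  -- transposed commutation facts
  have hct : ∀ P : Matrix (Fin n) (Fin n) ℝ, k * P = P * k → kᵀ * P = P * kᵀ := by
    intro P hP
    calc kᵀ * P = kᵀ * P * (k * kᵀ) := by rw [hk', mul_one]
      _ = kᵀ * (P * k) * kᵀ := by simp only [Matrix.mul_assoc]
      _ = kᵀ * (k * P) * kᵀ := by rw [hP]
      _ = P * kᵀ := by rw [← Matrix.mul_assoc kᵀ k P, hk, Matrix.one_mul]
  -- pass to w - 1 versions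
  have subc : ∀ (x P : Matrix (Fin n) (Fin n) ℝ), x * P = P * x →
      (x - 1) * P = P * (x - 1) := by
    intro x P h
    rw [Matrix.sub_mul, Matrix.mul_sub, Matrix.one_mul, Matrix.mul_one, h]
  set w₁ := k - 1 with hw₁
  set w₂ := kᵀ - 1 with hw₂
  have hw2eq : w₂ = -(kᵀ * w₁) := by
    rw [hw₂, hw₁, Matrix.mul_sub, Matrix.mul_one, hk, neg_sub]
  have hc1₁ : w₁ * (U * Uᵀ) = (U * Uᵀ) * w₁ := subc k _ hc1
  have hc2₁ : w₁ * (V * Vᵀ) = (V * Vᵀ) * w₁ := subc k _ hc2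
  have hc3₁ : w₁ * (U * Vᵀ) = (U * Vᵀ) * w₁ := subc k _ hc3
  have hc1₂ : w₂ * (U * Uᵀ) = (U * Uᵀ) * w₂ := subc kᵀ _ (hct _ hc1)
  have hc2₂ : w₂ * (V * Vᵀ) = (V * Vᵀ) * w₂ := subc kᵀ _ (hct _ hc2)
  have hc3₂ : w₂ * (U * Vᵀ) = (U * Vᵀ) * w₂ := subc kᵀ _ (hct _ hc3)
  have hd₂ : w₂ * (U * Vᵀ) = w₂ * (V * Uᵀ) := by
    rw [hw2eq, Matrix.neg_mul, Matrix.neg_mul, Matrix.mul_assoc, Matrix.mul_assoc, hd]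
  have he₂ : w₂ * (U * Uᵀ + V * Vᵀ) = w₂ := by
    rw [hw2eq, Matrix.neg_mul, Matrix.mul_assoc, he]
  have h₁₂ : w₁ * w₂ = -w₁ - w₂ := by
    rw [hw₁, hw₂]
    rw [Matrix.sub_mul, Matrix.mul_sub, Matrix.one_mul, Matrix.mul_one, hk']
    abel
  have h₂₁ : w₂ * w₁ = -w₁ - w₂ := by
    rw [hw₁, hw₂]
    rw [Matrix.sub_mul, Matrix.mul_sub, Matrix.one_mul, Matrix.mul_one, hk]
    abel
  obtain ⟨K1₁, K2₁⟩ := key_block U V w₁ ha hc1₁ hc2₁ hc3₁ hd he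
  obtain ⟨K1₂, K2₂⟩ := key_block U V w₂ ha hc1₂ hc2₂ hc3₂ hd₂ he₂
  -- push lemmas at the top level
  have pushUU : ∀ (w : Matrix (Fin n) (Fin n) ℝ), w * (U * Uᵀ) = (U * Uᵀ) * w →
      ∀ {m' : Type} (R : Matrix (Fin n) m' ℝ),
      w * (U * (Uᵀ * R)) = U * (Uᵀ * (w * R)) := by
    intro w hw m' R
    simpa only [Matrix.mul_assoc] using congrArg (fun x => x * R) hw
  have pushUV : ∀ (w : Matrix (Fin n) (Fin n) ℝ), w * (U * Vᵀ) = (U * Vᵀ) * w →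
      ∀ {m' : Type} (R : Matrix (Fin n) m' ℝ),
      w * (U * (Vᵀ * R)) = U * (Vᵀ * (w * R)) := by
    intro w hw m' R
    simpa only [Matrix.mul_assoc] using congrArg (fun x => x * R) hw
  have h12U : w₁ * (w₂ * U) = -(w₁ * U) - w₂ * U := by
    simpa only [Matrix.mul_assoc, Matrix.neg_mul, Matrix.sub_mul]
      using congrArg (fun x => x * U) h₁₂
  have h21U : w₂ * (w₁ * U) = -(w₁ * U) - w₂ * U := by
    simpa only [Matrix.mul_assoc, Matrix.neg_mul, Matrix.sub_mul]
      using congrArg (fun x => x * U) h₂₁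
  have hA₁A₂ : (Uᵀ * w₁ * U) * (Uᵀ * w₂ * U)
      = -((Uᵀ * w₁ * U) * (Uᵀ * U)) - (Uᵀ * w₂ * U) * (Uᵀ * U) := by
    simp only [Matrix.mul_assoc]
    rw [pushUU w₁ hc1₁ (w₂ * U), h12U, pushUU w₁ hc1₁ U, pushUU w₂ hc1₂ U]
    simp only [Matrix.mul_sub, Matrix.mul_neg]
  have hBq : (Vᵀ * w₂ * (w₁ * U)) * (Vᵀ * U)
      = -((Vᵀ * U) * (Vᵀ * w₁ * U)) - (Vᵀ * U) * (Vᵀ * w₂ * U) := by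
    simp only [Matrix.mul_assoc]
    rw [pushUV w₁ hc3₁ U, pushUV w₂ hc3₂ (w₁ * U), h21U]
    simp only [Matrix.mul_sub, Matrix.mul_neg]
  have hr : Vᵀ * V = 1 - Uᵀ * U := eq_sub_of_add_eq' ha
  have hComm : (-(Vᵀ * U)) * (Uᵀ * w₂ * U + 1) = (Uᵀ * w₂ * U + 1) * (-(Vᵀ * U)) := by
    rw [Matrix.neg_mul, Matrix.mul_neg, Matrix.mul_add, Matrix.add_mul, Matrix.mul_one,
      Matrix.one_mul, K1₂]
  have main : (Uᵀ * w₁ * U + 1) * (Uᵀ * w₂ * U + 1)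
      - (Vᵀ * w₂ * (w₁ * U)) * (-(Vᵀ * U)) = 1 := by
    rw [Matrix.mul_neg, sub_neg_eq_add, Matrix.add_mul, Matrix.mul_add, Matrix.mul_add,
      Matrix.one_mul, Matrix.mul_one, hA₁A₂, hBq, ← K2₁, ← K2₂, hr]
    simp only [Matrix.mul_sub, Matrix.mul_one]
    abel
  rw [det_fromBlocks_of_comm _ _ _ _ hComm, main, det_one]
end

section
/- Let k ∈ O(n) and U, V be n×κ real matrices such that k commutes with U ᵗU, V ᵗV, U ᵗV, V ᵗU, such that ᵗU V = ᵗV U, and (k−1) U ᵗV = (k−1) V ᵗU. Then the matrices c = −ᵗV U and d = ᵗU(k⁻¹−1)U + 1_κ commute: c·d = d·c. -/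
open Matrix

/-- Let `k ∈ O(n)` and `U, V` be real `n × κ` matrices such that
`k` commutes with `UᵗU, VᵗV, UᵗV, VᵗU`, that `ᵗUV = ᵗVU`, and that
`(k−1)UᵗV = (k−1)VᵗU`. Then the matrices `c = −ᵗVU` and
`d = ᵗU(k⁻¹−1)U + 1` commute: `c·d = d·c`. -/
theorem stmt_4 {n κ : ℕ} (k : Matrix (Fin n) (Fin n) ℝ)
    (U V : Matrix (Fin n) (Fin κ) ℝ)
    (hk : kᵀ * k = 1)
    (hc1 : k * (U * Uᵀ) = (U * Uᵀ) * k)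
    (hc2 : k * (V * Vᵀ) = (V * Vᵀ) * k)
    (hc3 : k * (U * Vᵀ) = (U * Vᵀ) * k)
    (hc4 : k * (V * Uᵀ) = (V * Uᵀ) * k)
    (hb : Uᵀ * V = Vᵀ * U)
    (hd : (k - 1) * (U * Vᵀ) = (k - 1) * (V * Uᵀ)) :
    (-(Vᵀ * U)) * (Uᵀ * (k⁻¹ - 1) * U + 1) =
      (Uᵀ * (k⁻¹ - 1) * U + 1) * (-(Vᵀ * U)) := by
  have hinv : k⁻¹ = kᵀ := Matrix.inv_eq_left_inv hk
  -- transpose of hc4 : kᵀ commutes with U * Vᵀ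
  have h4T : (kᵀ - 1) * (U * Vᵀ) = (U * Vᵀ) * (kᵀ - 1) := by
    have := congrArg Matrix.transpose hc4
    simp only [Matrix.transpose_mul, Matrix.transpose_transpose] at this
    simp only [sub_mul, mul_sub, one_mul, mul_one, ← this]
  -- transpose of hd
  have hdT : V * Uᵀ * (kᵀ - 1) = U * Vᵀ * (kᵀ - 1) := by
    have := congrArg Matrix.transpose hd
    simpa [Matrix.transpose_mul, Matrix.transpose_sub] using this
  have key : Vᵀ * U * (Uᵀ * (kᵀ - 1) * U) = Uᵀ * (kᵀ - 1) * U * (Vᵀ * U) := by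
    calc Vᵀ * U * (Uᵀ * (kᵀ - 1) * U)
        = Uᵀ * (V * Uᵀ * (kᵀ - 1)) * U := by rw [← hb]; simp only [Matrix.mul_sub, Matrix.sub_mul, Matrix.mul_one, Matrix.one_mul, Matrix.mul_assoc]
      _ = Uᵀ * (U * Vᵀ * (kᵀ - 1)) * U := by rw [hdT]
      _ = Uᵀ * ((kᵀ - 1) * (U * Vᵀ)) * U := by rw [← h4T]
      _ = Uᵀ * (kᵀ - 1) * U * (Vᵀ * U) := by simp only [Matrix.mul_sub, Matrix.sub_mul, Matrix.mul_one, Matrix.one_mul, Matrix.mul_assoc]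
  rw [hinv]
  calc (-(Vᵀ * U)) * (Uᵀ * (kᵀ - 1) * U + 1)
      = -(Vᵀ * U * (Uᵀ * (kᵀ - 1) * U)) - (Vᵀ * U) := by
        simp only [Matrix.mul_sub, Matrix.sub_mul, Matrix.mul_add, Matrix.add_mul, Matrix.neg_mul,
          Matrix.mul_neg, Matrix.mul_one, Matrix.one_mul, Matrix.mul_assoc, neg_sub, neg_neg]
        abel
    _ = -(Uᵀ * (kᵀ - 1) * U * (Vᵀ * U)) - (Vᵀ * U) := by rw [key]
    _ = (Uᵀ * (kᵀ - 1) * U + 1) * (-(Vᵀ * U)) := by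
        simp only [Matrix.mul_sub, Matrix.sub_mul, Matrix.mul_add, Matrix.add_mul, Matrix.neg_mul,
          Matrix.mul_neg, Matrix.mul_one, Matrix.one_mul, Matrix.mul_assoc, neg_sub, neg_neg]
        abel
end

section
/- Let G ⊂ O(n) be a compact group acting on ℝⁿ × ℝⁿ diagonally and consider the phase function ψ(x,ξ,k) = ⟨x − kx, ξ⟩ on ℝⁿ × ℝⁿ × G. Then the critical set {(x,ξ,k) : dψ = 0} equals {(z,k) ∈ Ω₀ × G : kz = z}, where z = (x,ξ) and Ω₀ = {(x,ξ) : ⟨Ax,ξ⟩ = 0 ∀ A ∈ 𝔤}. -/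
open Matrix

/-- For the phase function `ψ(x, ξ, k) = ⟨x − kx, ξ⟩` on
`ℝⁿ × ℝⁿ × G`, `G ⊂ O(n)` compact with Lie algebra `𝔤`, the critical set
`{dψ = 0}` equals `{(z, k) ∈ Ω₀ × G : kz = z}`, `z = (x, ξ)`. The differential
is expressed through its directional derivatives:
`∂_xψ` in direction `v` is `⟨v − kv, ξ⟩`, `∂_ξψ` in direction `w` is
`⟨x − kx, w⟩`, and the `G`-derivative along `A ∈ 𝔤` is `−⟨A k x, ξ⟩`. -/
theorem stmt_13 {n : ℕ} (G 𝔤 : Set (Matrix (Fin n) (Fin n) ℝ))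
    (horth : ∀ g ∈ G, gᵀ * g = 1) :
    ∀ x ξ : Fin n → ℝ, ∀ k ∈ G,
      ((∀ v : Fin n → ℝ, (v - k.mulVec v) ⬝ᵥ ξ = 0) ∧
       (∀ w : Fin n → ℝ, (x - k.mulVec x) ⬝ᵥ w = 0) ∧
       (∀ A ∈ 𝔤, (A.mulVec (k.mulVec x)) ⬝ᵥ ξ = 0)) ↔
      ((∀ A ∈ 𝔤, (A.mulVec x) ⬝ᵥ ξ = 0) ∧
        k.mulVec x = x ∧ k.mulVec ξ = ξ) := by
  intro x ξ k hk
  have hkt : kᵀ * k = 1 := horth k hk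
  have hkkt : k * kᵀ = 1 := mul_eq_one_comm.mp hkt
  constructor
  · rintro ⟨hx, hξ, hA⟩
    -- x - kx = 0
    have hxk : k.mulVec x = x := by
      have h0 := hξ (x - k.mulVec x)
      have := (dotProduct_self_eq_zero (v := x - k.mulVec x)).mp h0
      have := sub_eq_zero.mp this
      exact this.symm
    -- kᵀ ξ = ξ
    have hξk' : kᵀ.mulVec ξ = ξ := by
      have key : ∀ v : Fin n → ℝ, v ⬝ᵥ (ξ - kᵀ.mulVec ξ) = 0 := by
        intro v
        have h0 := hx v
        rw [sub_dotProduct] at h0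
        rw [dotProduct_sub, dotProduct_mulVec, vecMul_transpose]
        linarith
      have h0 := key (ξ - kᵀ.mulVec ξ)
      have := (dotProduct_self_eq_zero (v := ξ - kᵀ.mulVec ξ)).mp h0
      exact (sub_eq_zero.mp this).symm
    have hξk : k.mulVec ξ = ξ := by
      calc k.mulVec ξ = k.mulVec (kᵀ.mulVec ξ) := by rw [hξk']
        _ = (k * kᵀ).mulVec ξ := by rw [mulVec_mulVec]
        _ = ξ := by rw [hkkt, one_mulVec]
    refine ⟨?_, hxk, hξk⟩
    intro A hA'
    have := hA A hA'
    rwa [hxk] at this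
  · rintro ⟨hΩ, hxk, hξk⟩
    have hξk' : kᵀ.mulVec ξ = ξ := by
      calc kᵀ.mulVec ξ = kᵀ.mulVec (k.mulVec ξ) := by rw [hξk]
        _ = (kᵀ * k).mulVec ξ := by rw [mulVec_mulVec]
        _ = ξ := by rw [hkt, one_mulVec]
    refine ⟨?_, ?_, ?_⟩
    · intro v
      have h : (k *ᵥ v) ⬝ᵥ ξ = v ⬝ᵥ ξ := by
        rw [dotProduct_comm, dotProduct_mulVec, ← mulVec_transpose, hξk',
          dotProduct_comm]
      rw [sub_dotProduct, h, sub_self]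
    · intro w
      rw [hxk, sub_self, zero_dotProduct]
    · intro A hA'
      rw [hxk]; exact hΩ A hA'
end
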